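/- For each k let Σ̇_k be an arbitrary n_k × n_k real symmetric matrix, set Σ̇^k = Σ_1 ⊗ ⋯ ⊗ Σ̇_k ⊗ ⋯ ⊗ Σ_r (the k-th factor replaced) and W_k = Σ̇^k Q. Then: (i) tr W_k = n_{(k)} tr(Σ̇_kΣ_k^{-1}) − tr(Σ̇_kΦ_k); (ii) tr(W_k²) = n_{(k)} tr((Σ̇_kΣ_k^{-1})²) + tr((Σ̇_kΦ_k)²) − 2 tr(Σ̇_kΣ_k^{-1}Σ̇_kΦ_k); (iii) for i ≠ j, tr(W_iW_j) = (∏_{l≠i,j} n_l) · tr(Σ̇_iΣ_i^{-1}) tr(Σ̇_jΣ_j^{-1}) − tr(Σ̇_iΦ_i) tr(Σ̇_jΦ_j). -/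

import Mathlib

/-!
Since `X'Σ⁻¹X = ∏ₖ Xₖ'Σₖ⁻¹Xₖ`, the projection term of `Q` factors and
`Q = ⊗ₖ Σₖ⁻¹ − ⊗ₖ Φₖ`. Hence `Wₖ` is the difference of two Kronecker products whose factors
away from `k` are `I` and `Σₗ Φₗ`, an idempotent of trace `1`. Every product of such Kronecker
products is again one, and the trace of a Kronecker product is the product of the traces.
-/

open Matrix Finset

/-- The `r`-fold Kronecker product, realized entrywise on the product index type. -/
def kron {r : ℕ} (ns : Fin r → ℕ)
    (M : (k : Fin r) → Matrix (Fin (ns k)) (Fin (ns k)) ℝ) :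
    Matrix ((k : Fin r) → Fin (ns k)) ((k : Fin r) → Fin (ns k)) ℝ :=
  Matrix.of fun i j => ∏ k, M k (i k) (j k)

/-- Q = S⁻¹ − S⁻¹X(X'S⁻¹X)⁻¹X'S⁻¹ for a column vector X. -/
noncomputable def Qmat {ι : Type*} [Fintype ι] [DecidableEq ι]
    (S : Matrix ι ι ℝ) (X : ι → ℝ) : Matrix ι ι ℝ :=
  S⁻¹ - (X ⬝ᵥ S⁻¹.mulVec X)⁻¹ • (S⁻¹ * vecMulVec X X * S⁻¹)

/-- Φ = S⁻¹X(X'S⁻¹X)⁻¹X'S⁻¹ for a column vector X. -/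
noncomputable def Phi {m : ℕ} (S : Matrix (Fin m) (Fin m) ℝ) (X : Fin m → ℝ) :
    Matrix (Fin m) (Fin m) ℝ :=
  (X ⬝ᵥ S⁻¹.mulVec X)⁻¹ • (S⁻¹ * vecMulVec X X * S⁻¹)

/-- Wₖ = Σ̇ᵏ·Q, where Σ̇ᵏ is the Kronecker product with the k-th factor replaced by Σ̇ₖ. -/
noncomputable def Wmat {r : ℕ} (ns : Fin r → ℕ)
    (Ss Sd : (k : Fin r) → Matrix (Fin (ns k)) (Fin (ns k)) ℝ)
    (Xs : (k : Fin r) → Fin (ns k) → ℝ) (k : Fin r) :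
    Matrix ((k : Fin r) → Fin (ns k)) ((k : Fin r) → Fin (ns k)) ℝ :=
  kron ns (Function.update Ss k (Sd k)) * Qmat (kron ns Ss) (fun i => ∏ l, Xs l (i l))

section Kron

variable {r : ℕ} {ns : Fin r → ℕ}

lemma kron_mul (A B : (k : Fin r) → Matrix (Fin (ns k)) (Fin (ns k)) ℝ) :
    kron ns A * kron ns B = kron ns (fun k => A k * B k) := by
  ext i j
  simp only [kron, mul_apply, of_apply, Fintype.prod_sum, prod_mul_distrib]

lemma kron_one : kron ns (fun _ => (1 : Matrix _ _ ℝ)) = 1 := by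
  ext i j
  by_cases h : i = j
  · simp [kron, one_apply, h]
  · obtain ⟨k, hk⟩ := Function.ne_iff.mp h
    simpa [kron, one_apply, h] using prod_eq_zero (mem_univ k) (by simp [hk])

lemma kron_smul (c : Fin r → ℝ) (M : (k : Fin r) → Matrix (Fin (ns k)) (Fin (ns k)) ℝ) :
    kron ns (fun k => c k • M k) = (∏ k, c k) • kron ns M := by
  ext i j
  simp [kron, prod_mul_distrib]

lemma kron_inv (S : (k : Fin r) → Matrix (Fin (ns k)) (Fin (ns k)) ℝ)
    (hS : ∀ k, IsUnit (S k).det) :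
    (kron ns S)⁻¹ = kron ns (fun k => (S k)⁻¹) := by
  apply inv_eq_right_inv
  simp only [kron_mul, mul_nonsing_inv _ (hS _), kron_one]

lemma trace_kron (M : (k : Fin r) → Matrix (Fin (ns k)) (Fin (ns k)) ℝ) :
    (kron ns M).trace = ∏ k, (M k).trace := by
  simp only [trace, Matrix.diag, kron, of_apply, Fintype.prod_sum]

lemma trace_kron_update (M : (k : Fin r) → Matrix (Fin (ns k)) (Fin (ns k)) ℝ) (k : Fin r)
    (a : Matrix (Fin (ns k)) (Fin (ns k)) ℝ) :
    (kron ns (Function.update M k a)).trace = a.trace * ∏ l ∈ univ.erase k, (M l).trace := by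
  rw [trace_kron, ← mul_prod_erase univ _ (mem_univ k), Function.update_self]
  congr 1
  exact prod_congr rfl fun l hl => by rw [Function.update_of_ne (ne_of_mem_erase hl)]

lemma trace_kron_update_update (M : (k : Fin r) → Matrix (Fin (ns k)) (Fin (ns k)) ℝ)
    {i j : Fin r} (hij : i ≠ j) (a : Matrix (Fin (ns i)) (Fin (ns i)) ℝ)
    (b : Matrix (Fin (ns j)) (Fin (ns j)) ℝ) :
    (kron ns (Function.update (Function.update M i a) j b)).trace
      = a.trace * (b.trace * ∏ l ∈ (univ.erase i).erase j, (M l).trace) := by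
  rw [trace_kron_update, erase_right_comm, ← mul_prod_erase _ _ (mem_erase.2 ⟨hij, mem_univ i⟩),
    Function.update_self, mul_left_comm]
  congr 2
  exact prod_congr rfl fun l hl => by
    rw [Function.update_of_ne (ne_of_mem_erase hl)]

lemma kron_update_mul_kron_update (F G : (k : Fin r) → Matrix (Fin (ns k)) (Fin (ns k)) ℝ)
    (k : Fin r) (a b : Matrix (Fin (ns k)) (Fin (ns k)) ℝ) :
    kron ns (Function.update F k a) * kron ns (Function.update G k b)
      = kron ns (Function.update (fun l => F l * G l) k (a * b)) := by
  rw [kron_mul]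
  congr 1
  funext l
  exact Function.apply_update₂ (fun _ x y => x * y) F G k a b l

lemma kron_update_mul_kron_update_of_ne (F G : (k : Fin r) → Matrix (Fin (ns k)) (Fin (ns k)) ℝ)
    {i j : Fin r} (hij : i ≠ j) (a : Matrix (Fin (ns i)) (Fin (ns i)) ℝ)
    (b : Matrix (Fin (ns j)) (Fin (ns j)) ℝ) :
    kron ns (Function.update F i a) * kron ns (Function.update G j b)
      = kron ns
          (Function.update (Function.update (fun l => F l * G l) i (a * G i)) j (F j * b)) := by
  rw [kron_mul]
  congr 1
  funext l
  by_cases hli : l = i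
  · subst hli; simp [hij]
  by_cases hlj : l = j
  · subst hlj; simp [hli]
  simp [hli, hlj]

end Kron

section Phi

variable {m : ℕ} {S : Matrix (Fin m) (Fin m) ℝ} {X : Fin m → ℝ}

lemma trace_vecMulVec_mul {ι : Type*} [Fintype ι] (A : Matrix ι ι ℝ) (X : ι → ℝ) :
    (vecMulVec X X * A).trace = X ⬝ᵥ A *ᵥ X := by
  rw [vecMulVec_mul, trace_vecMulVec, dotProduct_comm, ← dotProduct_mulVec]

lemma vecMulVec_mul_mul_vecMulVec {ι : Type*} [Fintype ι] (A : Matrix ι ι ℝ) (X : ι → ℝ) :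
    vecMulVec X X * A * vecMulVec X X = (X ⬝ᵥ A *ᵥ X) • vecMulVec X X := by
  rw [vecMulVec_mul, vecMulVec_mul_vecMulVec, vecMulVec_smul, ← dotProduct_mulVec]

lemma Phi_mul_mul_Phi (hS : IsUnit S.det) (hX : X ⬝ᵥ S⁻¹ *ᵥ X ≠ 0) :
    Phi S X * S * Phi S X = Phi S X := by
  have hSS : S⁻¹ * S * S⁻¹ = S⁻¹ := by rw [nonsing_inv_mul S hS, one_mul]
  calc Phi S X * S * Phi S X
      = (X ⬝ᵥ S⁻¹ *ᵥ X)⁻¹ ^ 2 •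
          (S⁻¹ * (vecMulVec X X * (S⁻¹ * S * S⁻¹) * vecMulVec X X) * S⁻¹) := by
        simp only [Phi, Matrix.smul_mul, Matrix.mul_smul, smul_smul, Matrix.mul_assoc, sq]
    _ = Phi S X := by
        rw [hSS, vecMulVec_mul_mul_vecMulVec, Matrix.mul_smul, Matrix.smul_mul, smul_smul, Phi,
          Matrix.mul_assoc]
        congr 1
        field_simp

lemma trace_mul_Phi (hS : IsUnit S.det) (hX : X ⬝ᵥ S⁻¹ *ᵥ X ≠ 0) : (S * Phi S X).trace = 1 := by
  rw [Phi, Matrix.mul_smul, ← Matrix.mul_assoc, ← Matrix.mul_assoc, mul_nonsing_inv S hS, one_mul,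
    trace_smul, trace_vecMulVec_mul, smul_eq_mul, inv_mul_cancel₀ hX]

lemma mul_inv_mul_mul_Phi {n : Type*} [Fintype n] (hS : IsUnit S.det) (A : Matrix n (Fin m) ℝ) :
    A * S⁻¹ * (S * Phi S X) = A * Phi S X := by
  rw [Matrix.mul_assoc, ← Matrix.mul_assoc S⁻¹, nonsing_inv_mul S hS, one_mul]

lemma mul_Phi_mul_mul_Phi {n : Type*} [Fintype n] (hS : IsUnit S.det) (hX : X ⬝ᵥ S⁻¹ *ᵥ X ≠ 0)
    (A : Matrix n (Fin m) ℝ) : A * Phi S X * (S * Phi S X) = A * Phi S X := by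
  rw [Matrix.mul_assoc, ← Matrix.mul_assoc _ S, Phi_mul_mul_Phi hS hX]

end Phi

section Covariance

variable {r : ℕ} {ns : Fin r → ℕ} (Ss Sd : (k : Fin r) → Matrix (Fin (ns k)) (Fin (ns k)) ℝ)
  (Xs : (k : Fin r) → Fin (ns k) → ℝ)

lemma Qmat_kron (hS : ∀ k, IsUnit (Ss k).det) :
    Qmat (kron ns Ss) (fun i => ∏ l, Xs l (i l))
      = kron ns (fun k => (Ss k)⁻¹) - kron ns (fun k => Phi (Ss k) (Xs k)) := by
  have hvmv : vecMulVec (fun i => ∏ l, Xs l (i l)) (fun i => ∏ l, Xs l (i l))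
      = kron ns (fun k => vecMulVec (Xs k) (Xs k)) := by
    ext i j
    simp [kron, vecMulVec_apply, prod_mul_distrib]
  have hc : (fun i => ∏ l, Xs l (i l)) ⬝ᵥ (kron ns Ss)⁻¹ *ᵥ (fun i => ∏ l, Xs l (i l))
      = ∏ k, Xs k ⬝ᵥ (Ss k)⁻¹ *ᵥ Xs k := by
    simp only [← trace_vecMulVec_mul, hvmv, kron_inv Ss hS, kron_mul, trace_kron]
  rw [Qmat, hc, kron_inv Ss hS, hvmv, kron_mul, kron_mul, ← prod_inv_distrib, ← kron_smul]
  rfl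

lemma Wmat_eq_sub (hS : ∀ k, IsUnit (Ss k).det) (k : Fin r) :
    Wmat ns Ss Sd Xs k
      = kron ns (Function.update (fun _ => 1) k (Sd k * (Ss k)⁻¹))
        - kron ns (Function.update (fun l => Ss l * Phi (Ss l) (Xs l)) k
            (Sd k * Phi (Ss k) (Xs k))) := by
  rw [Wmat, Qmat_kron Ss Xs hS, Matrix.mul_sub, kron_mul, kron_mul]
  congr 2 <;> funext l <;> rcases eq_or_ne l k with rfl | hl <;>
    simp [*, mul_nonsing_inv _ (hS _)]

variable {Ss Xs} (hS : ∀ k, IsUnit (Ss k).det) (hX : ∀ k, Xs k ⬝ᵥ (Ss k)⁻¹ *ᵥ Xs k ≠ 0)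
include hS hX

lemma trace_Wmat (k : Fin r) :
    (Wmat ns Ss Sd Xs k).trace
      = ((∏ i ∈ univ.erase k, ns i : ℕ) : ℝ) * (Sd k * (Ss k)⁻¹).trace
        - (Sd k * Phi (Ss k) (Xs k)).trace := by
  rw [Wmat_eq_sub Ss Sd Xs hS, trace_sub, trace_kron_update, trace_kron_update]
  simp [trace_mul_Phi (hS _) (hX _), mul_comm]

lemma trace_Wmat_mul_self (k : Fin r) :
    (Wmat ns Ss Sd Xs k * Wmat ns Ss Sd Xs k).trace
      = ((∏ i ∈ univ.erase k, ns i : ℕ) : ℝ) * (Sd k * (Ss k)⁻¹ * (Sd k * (Ss k)⁻¹)).trace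
        + (Sd k * Phi (Ss k) (Xs k) * (Sd k * Phi (Ss k) (Xs k))).trace
        - 2 * (Sd k * (Ss k)⁻¹ * Sd k * Phi (Ss k) (Xs k)).trace := by
  rw [Wmat_eq_sub Ss Sd Xs hS]
  simp only [Matrix.sub_mul, Matrix.mul_sub, trace_sub, kron_update_mul_kron_update,
    trace_kron_update]
  simp only [one_mul, mul_one, trace_one, Fintype.card_fin, mul_Phi_mul_mul_Phi (hS _) (hX _),
    trace_mul_Phi (hS _) (hX _), prod_const_one]
  rw [trace_mul_comm (Sd k * Phi (Ss k) (Xs k)),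
    Matrix.mul_assoc (Sd k * (Ss k)⁻¹) (Sd k)]
  push_cast
  ring

lemma trace_Wmat_mul_Wmat_of_ne {i j : Fin r} (hij : i ≠ j) :
    (Wmat ns Ss Sd Xs i * Wmat ns Ss Sd Xs j).trace
      = ((∏ l ∈ (univ.erase i).erase j, ns l : ℕ) : ℝ) *
          ((Sd i * (Ss i)⁻¹).trace * (Sd j * (Ss j)⁻¹).trace)
        - (Sd i * Phi (Ss i) (Xs i)).trace * (Sd j * Phi (Ss j) (Xs j)).trace := by
  rw [Wmat_eq_sub Ss Sd Xs hS, Wmat_eq_sub Ss Sd Xs hS]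
  simp only [Matrix.sub_mul, Matrix.mul_sub, trace_sub, kron_update_mul_kron_update_of_ne _ _ hij,
    trace_kron_update_update _ hij]
  simp only [one_mul, mul_one, trace_one, Fintype.card_fin, mul_Phi_mul_mul_Phi (hS _) (hX _),
    mul_inv_mul_mul_Phi (hS _), trace_mul_Phi (hS _) (hX _), prod_const_one]
  rw [trace_mul_comm (Ss j * Phi (Ss j) (Xs j)), trace_mul_comm (Ss j * Phi (Ss j) (Xs j)),
    mul_inv_mul_mul_Phi (hS j), mul_Phi_mul_mul_Phi (hS j) (hX j)]
  push_cast
  ring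

end Covariance

theorem trace_formulas_W_general
    (r : ℕ) (ns : Fin r → ℕ)
    (Ss : (k : Fin r) → Matrix (Fin (ns k)) (Fin (ns k)) ℝ)
    (hSs : ∀ k, (Ss k).PosDef)
    (Xs : (k : Fin r) → Fin (ns k) → ℝ) (hXs : ∀ k, Xs k ≠ 0)
    (Sd : (k : Fin r) → Matrix (Fin (ns k)) (Fin (ns k)) ℝ) :
    (∀ k, (Wmat ns Ss Sd Xs k).trace
        = ((∏ i ∈ Finset.univ.erase k, ns i : ℕ) : ℝ) * (Sd k * (Ss k)⁻¹).trace
          - (Sd k * Phi (Ss k) (Xs k)).trace) ∧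
    (∀ k, (Wmat ns Ss Sd Xs k * Wmat ns Ss Sd Xs k).trace
        = ((∏ i ∈ Finset.univ.erase k, ns i : ℕ) : ℝ) *
            (Sd k * (Ss k)⁻¹ * (Sd k * (Ss k)⁻¹)).trace
          + (Sd k * Phi (Ss k) (Xs k) * (Sd k * Phi (Ss k) (Xs k))).trace
          - 2 * (Sd k * (Ss k)⁻¹ * Sd k * Phi (Ss k) (Xs k)).trace) ∧
    (∀ i j, i ≠ j →
      (Wmat ns Ss Sd Xs i * Wmat ns Ss Sd Xs j).trace
        = ((∏ l ∈ (Finset.univ.erase i).erase j, ns l : ℕ) : ℝ) *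
            ((Sd i * (Ss i)⁻¹).trace * (Sd j * (Ss j)⁻¹).trace)
          - (Sd i * Phi (Ss i) (Xs i)).trace * (Sd j * Phi (Ss j) (Xs j)).trace) := by
  have hS : ∀ k, IsUnit (Ss k).det := fun k => (hSs k).det_pos.ne'.isUnit
  have hX : ∀ k, Xs k ⬝ᵥ (Ss k)⁻¹ *ᵥ Xs k ≠ 0 := fun k => by
    simpa using ((hSs k).inv.dotProduct_mulVec_pos (hXs k)).ne'
  exact ⟨trace_Wmat Sd hS hX, trace_Wmat_mul_self Sd hS hX,
    fun _ _ => trace_Wmat_mul_Wmat_of_ne Sd hS hX⟩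

/-- trace formulas for Wₖ. -/
theorem trace_formulas_W
    (r : ℕ) (hr : 2 ≤ r) (ns : Fin r → ℕ)
    (Ss : (k : Fin r) → Matrix (Fin (ns k)) (Fin (ns k)) ℝ)
    (hSs : ∀ k, (Ss k).PosDef)
    (Xs : (k : Fin r) → Fin (ns k) → ℝ) (hXs : ∀ k, Xs k ≠ 0)
    (Sd : (k : Fin r) → Matrix (Fin (ns k)) (Fin (ns k)) ℝ)
    (hSd : ∀ k, (Sd k).IsSymm) :
    (∀ k, (Wmat ns Ss Sd Xs k).trace
        = ((∏ i ∈ Finset.univ.erase k, ns i : ℕ) : ℝ) * (Sd k * (Ss k)⁻¹).trace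
          - (Sd k * Phi (Ss k) (Xs k)).trace) ∧
    (∀ k, (Wmat ns Ss Sd Xs k * Wmat ns Ss Sd Xs k).trace
        = ((∏ i ∈ Finset.univ.erase k, ns i : ℕ) : ℝ) *
            (Sd k * (Ss k)⁻¹ * (Sd k * (Ss k)⁻¹)).trace
          + (Sd k * Phi (Ss k) (Xs k) * (Sd k * Phi (Ss k) (Xs k))).trace
          - 2 * (Sd k * (Ss k)⁻¹ * Sd k * Phi (Ss k) (Xs k)).trace) ∧
    (∀ i j, i ≠ j →
      (Wmat ns Ss Sd Xs i * Wmat ns Ss Sd Xs j).trace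
        = ((∏ l ∈ (Finset.univ.erase i).erase j, ns l : ℕ) : ℝ) *
            ((Sd i * (Ss i)⁻¹).trace * (Sd j * (Ss j)⁻¹).trace)
          - (Sd i * Phi (Ss i) (Xs i)).trace * (Sd j * Phi (Ss j) (Xs j)).trace) :=
  trace_formulas_W_general r ns Ss hSs Xs hXs Sd
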